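/- Let C be a finite multiset of instance values with P(C) ≥ 1 and N(C) ≥ 1. Define b_ROCAUC(C) = 1 if for all (y, ŷ), (y', ŷ') in C, y < y' implies ŷ < ŷ' and y > y' implies ŷ > ŷ'; b_ROCAUC(C) = 1/2 if this fails but for all (y, ŷ), (y', ŷ') in C, y < y' implies ŷ ≤ ŷ' and y > y' implies ŷ ≥ ŷ'; and b_ROCAUC(C) = 0 otherwise. Then b_ROCAUC(C) is a tight lower bound for ROCAUC over sub-multisets: (i) for every sub-multiset C' ⊆ C with P(C') ≥ 1 and N(C') ≥ 1, ROCAUC(C') ≥ b_ROCAUC(C); and (ii) there exists a sub-multiset C' ⊆ C with P(C') ≥ 1 and N(C') ≥ 1 such that ROCAUC(C') = b_ROCAUC(C). -/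

import Mathlib

/-!
Every step of the ROC staircase along the FP axis sits at a threshold equal to the score of some
negative, and its height is the average of the TP counts at that threshold and at the next lower
one. If all negatives score strictly below all positives, both counts equal `P`; if only weakly,
the count at the lower threshold does, so the height is at least `P / 2`. Summing over the steps
gives an area of at least `P · N`, resp. `P · N / 2`, for every sub-multiset. For tightness, a
single positive-negative pair that is correctly ordered, tied, or inverted (whichever the case of
`b_ROCAUC` demands) has ROC AUC exactly `1`, `1/2`, or `0`.
-/

/-- An instance value: a label (`true` = positive, i.e. `y = 1`;
`false` = negative, i.e. `y = 0`) together with a real prediction score. -/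
abbrev Inst : Type := Bool × ℝ

/-- `P C`: the number of positive elements of `C`. -/
def P (C : Multiset Inst) : ℕ := (C.filter (fun c => c.1 = true)).card

/-- `N C`: the number of negative elements of `C`. -/
def N (C : Multiset Inst) : ℕ := (C.filter (fun c => c.1 = false)).card

/-- `TP C t`: the number of positives of `C` with prediction strictly above `t`. -/
noncomputable def TP (C : Multiset Inst) (t : ℝ) : ℕ :=
  (C.filter (fun c => c.1 = true ∧ t < c.2)).card

/-- `FP C t`: the number of negatives of `C` with prediction strictly above `t`. -/
noncomputable def FP (C : Multiset Inst) (t : ℝ) : ℕ :=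
  (C.filter (fun c => c.1 = false ∧ t < c.2)).card

/-- The ROC/PR supporting points `(TP, FP)` of `C`, listed in order of
decreasing threshold, for `t` ranging over the prediction values occurring in
`C` together with `t = -∞` (the latter yielding the final point `(P C, N C)`). -/
noncomputable def supportingPoints (C : Multiset Inst) : List (ℝ × ℝ) :=
  (((C.map Prod.snd).toFinset.sort (· ≤ ·)).reverse.map
    (fun t => ((TP C t : ℝ), (FP C t : ℝ)))) ++ [((P C : ℝ), (N C : ℝ))]

/-- The trapezoidal sum `Σ_{i=2}^{k} |FP_i − FP_{i−1}| · (TP_i + TP_{i−1})/2`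
over a list of `(TP, FP)` points. -/
noncomputable def trapROC : List (ℝ × ℝ) → ℝ
  | [] => 0
  | [_] => 0
  | a :: b :: l => |b.2 - a.2| * (b.1 + a.1) / 2 + trapROC (b :: l)

/-- The area under the ROC curve of `C` (defined whenever `P C ≥ 1` and `N C ≥ 1`). -/
noncomputable def ROCAUC (C : Multiset Inst) : ℝ :=
  trapROC (supportingPoints C) / ((P C : ℝ) * (N C : ℝ))

/-- The trapezoidal sum `Σ_{i=2}^{k} |TP_i − TP_{i−1}| ·
(TP_i/(TP_i+FP_i) + TP_{i−1}/(TP_{i−1}+FP_{i−1}))/2` over a list of `(TP, FP)`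
points; in `ℝ`, division by zero yields `0`, realizing the convention `0/0 = 0`. -/
noncomputable def trapPR : List (ℝ × ℝ) → ℝ
  | [] => 0
  | [_] => 0
  | a :: b :: l =>
      |b.1 - a.1| * (b.1 / (b.1 + b.2) + a.1 / (a.1 + a.2)) / 2 + trapPR (b :: l)

/-- The (linearly interpolated) area under the PR curve of `C`
(defined whenever `P C ≥ 1`). -/
noncomputable def PRAUC (C : Multiset Inst) : ℝ :=
  trapPR (supportingPoints C) / (P C : ℝ)

open Classical in
/-- The lower bound `b_ROCAUC`: `1` on perfect predictions, `1/2` on perfect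
predictions with ties, and `0` otherwise.  (On `Bool`, `false < true`
corresponds to `y < y'` for labels `y, y' ∈ {0, 1}`.) -/
noncomputable def bROCAUC (C : Multiset Inst) : ℝ :=
  if ∀ c ∈ C, ∀ c' ∈ C, (c.1 < c'.1 → c.2 < c'.2) ∧ (c'.1 < c.1 → c'.2 < c.2) then 1
  else if ∀ c ∈ C, ∀ c' ∈ C, (c.1 < c'.1 → c.2 ≤ c'.2) ∧ (c'.1 < c.1 → c'.2 ≤ c.2) then 1/2
  else 0


section Counts

variable {C : Multiset Inst} {t : ℝ}

theorem TP_eq_P_of_lt (h : ∀ c ∈ C, c.1 = true → t < c.2) : TP C t = P C :=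
  congrArg Multiset.card <|
    Multiset.filter_congr fun c hc => ⟨And.left, fun hc₁ => ⟨hc₁, h c hc hc₁⟩⟩

theorem FP_eq_N_of_lt (h : ∀ c ∈ C, c.1 = false → t < c.2) : FP C t = N C :=
  congrArg Multiset.card <|
    Multiset.filter_congr fun c hc => ⟨And.left, fun hc₁ => ⟨hc₁, h c hc hc₁⟩⟩

theorem FP_eq_zero_of_le (h : ∀ c ∈ C, c.2 ≤ t) : FP C t = 0 := by
  simp only [FP, Multiset.card_eq_zero, Multiset.filter_eq_nil]
  exact fun c hc hc' => (h c hc).not_gt hc'.2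

theorem FP_antitone (C : Multiset Inst) : Antitone (FP C) := fun _ _ hab =>
  Multiset.card_le_card <|
    Multiset.monotone_filter_right C fun _ hc => ⟨hc.1, hab.trans_lt hc.2⟩

theorem exists_neg_mem_Ioc_of_FP_lt {a b : ℝ} (h : FP C a < FP C b) :
    ∃ n ∈ C, n.1 = false ∧ b < n.2 ∧ n.2 ≤ a := by
  by_contra! hno
  refine h.not_ge <| Multiset.card_le_card <|
    Multiset.le_filter.2 ⟨Multiset.filter_le _ _, fun c hc => ?_⟩
  rw [Multiset.mem_filter] at hc
  exact ⟨hc.2.1, hno c hc.1 hc.2.1 hc.2.2⟩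

theorem exists_pos_of_one_le_P (h : 1 ≤ P C) : ∃ p ∈ C, p.1 = true := by
  simpa using Multiset.card_pos_iff_exists_mem.1 h

theorem exists_neg_of_one_le_N (h : 1 ≤ N C) : ∃ n ∈ C, n.1 = false := by
  simpa using Multiset.card_pos_iff_exists_mem.1 h

theorem ne_zero_of_one_le_P (h : 1 ≤ P C) : C ≠ 0 := by
  rintro rfl
  simp [P] at h

end Counts

theorem trapROC_nonneg : ∀ L : List (ℝ × ℝ), (∀ x ∈ L, 0 ≤ x.1) → 0 ≤ trapROC L
  | [], _ | [_], _ => le_rfl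
  | a :: b :: L, h => by
    have ha := h a (by simp)
    have hb := h b (by simp)
    have := trapROC_nonneg (b :: L) fun x hx => h x (List.mem_cons_of_mem a hx)
    rw [trapROC]
    positivity

theorem ROCAUC_nonneg (C : Multiset Inst) : 0 ≤ ROCAUC C := by
  refine div_nonneg (trapROC_nonneg _ fun x hx => ?_) (by positivity)
  simp only [supportingPoints, List.mem_append, List.mem_map, List.mem_singleton] at hx
  rcases hx with ⟨t, -, rfl⟩ | rfl <;> positivity

section Thresholds

noncomputable def thresholds (C : Multiset Inst) : List ℝ :=
  ((C.map Prod.snd).toFinset.sort (· ≤ ·)).reverse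

theorem mem_thresholds (C : Multiset Inst) (t : ℝ) :
    t ∈ thresholds C ↔ ∃ c ∈ C, c.2 = t := by
  simp [thresholds]

theorem snd_mem_thresholds {C : Multiset Inst} {c : Inst} (hc : c ∈ C) :
    c.2 ∈ thresholds C :=
  (mem_thresholds C c.2).2 ⟨c, hc, rfl⟩

theorem thresholds_pairwise (C : Multiset Inst) : (thresholds C).Pairwise (· > ·) :=
  (C.map Prod.snd).toFinset.sortedLT_sort.reverse.pairwise

theorem thresholds_eq {C : Multiset Inst} {l : List ℝ} (hl : l.Pairwise (· > ·))
    (hmem : ∀ t, t ∈ l ↔ ∃ c ∈ C, c.2 = t) : thresholds C = l :=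
  (thresholds_pairwise C).eq_of_mem_iff hl fun t => (mem_thresholds C t).trans (hmem t).symm

theorem exists_lt_scores (C : Multiset Inst) : ∃ t₀, ∀ c ∈ C, t₀ < c.2 := by
  obtain ⟨b, hb⟩ := (C.map Prod.snd).toFinset.bddBelow
  exact ⟨b - 1, fun c hc => (sub_one_lt b).trans_le <|
    hb (Multiset.mem_toFinset.2 (Multiset.mem_map_of_mem _ hc))⟩

theorem supportingPoints_eq_map_thresholds (C : Multiset Inst) :
    supportingPoints C = (thresholds C).map (fun t => ((TP C t : ℝ), (FP C t : ℝ))) ++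
      [((P C : ℝ), (N C : ℝ))] :=
  rfl

theorem supportingPoints_eq {C : Multiset Inst} {t₀ : ℝ} (h : ∀ c ∈ C, t₀ < c.2) :
    supportingPoints C =
      (thresholds C ++ [t₀]).map fun t => ((TP C t : ℝ), (FP C t : ℝ)) := by
  simp [supportingPoints_eq_map_thresholds, TP_eq_P_of_lt fun c hc _ => h c hc,
    FP_eq_N_of_lt fun c hc _ => h c hc]

end Thresholds

section LowerBound

variable {C : Multiset Inst} {K : ℝ}

theorem mul_sub_le_trapROC_map
    (H : ∀ ⦃t t' : ℝ⦄, t' < t → (∃ n ∈ C, n.1 = false ∧ n.2 = t) →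
      K ≤ ((TP C t' : ℝ) + TP C t) / 2) :
    ∀ (a : ℝ) (L : List ℝ), (a :: L).Pairwise (· > ·) →
      (∀ c ∈ C, c.2 ≤ a → c.2 ∈ a :: L) →
      K * ((FP C ((a :: L).getLast (List.cons_ne_nil a L)) : ℝ) - FP C a) ≤
        trapROC ((a :: L).map fun t => ((TP C t : ℝ), (FP C t : ℝ)))
  | a, [], _, _ => by simp [trapROC]
  | a, b :: L, hsorted, hcover => by
    obtain ⟨ha, hbL⟩ := List.pairwise_cons.1 hsorted
    have hba : b < a := ha b List.mem_cons_self
    have ih := mul_sub_le_trapROC_map H b L hbL fun c hc hcb => by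
      rcases List.mem_cons.1 (hcover c hc (hcb.trans hba.le)) with hca | hc
      · exact absurd (hca ▸ hcb) hba.not_ge
      · exact hc
    have step : K * ((FP C b : ℝ) - FP C a) ≤
        |(FP C b : ℝ) - FP C a| * ((TP C b : ℝ) + TP C a) / 2 := by
      rcases (FP_antitone C hba.le).eq_or_lt with heq | hlt
      · simp [heq]
      obtain ⟨n, hnC, hn, hbn, hna⟩ := exists_neg_mem_Ioc_of_FP_lt hlt
      -- no score lies strictly between the consecutive thresholds `b < a`
      have hn_eq : n.2 = a := by
        rcases List.mem_cons.1 (hcover n hnC hna) with h | h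
        · exact h
        rcases List.mem_cons.1 h with h | h
        · exact absurd h hbn.ne'
        · exact absurd (List.rel_of_pairwise_cons hbL h) (not_lt.2 hbn.le)
      have hK := H hba ⟨n, hnC, hn, hn_eq⟩
      have hpos : (0 : ℝ) < FP C b - FP C a := sub_pos.2 (by exact_mod_cast hlt)
      rw [abs_of_pos hpos, mul_div_assoc, mul_comm K]
      exact mul_le_mul_of_nonneg_left hK hpos.le
    simp only [List.map_cons, trapROC, List.getLast_cons_cons] at ih ⊢
    linarith

theorem mul_N_le_trapROC (hC : C ≠ 0)
    (H : ∀ ⦃t t' : ℝ⦄, t' < t → (∃ n ∈ C, n.1 = false ∧ n.2 = t) →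
      K ≤ ((TP C t' : ℝ) + TP C t) / 2) :
    K * N C ≤ trapROC (supportingPoints C) := by
  obtain ⟨t₀, ht₀⟩ := exists_lt_scores C
  obtain ⟨c, hc⟩ := Multiset.exists_mem_of_ne_zero hC
  obtain ⟨a, L, hL⟩ :=
    List.exists_cons_of_ne_nil <| List.ne_nil_of_mem (snd_mem_thresholds hc)
  have hsorted : (a :: L).Pairwise (· > ·) := hL ▸ thresholds_pairwise C
  have hcover : ∀ c ∈ C, c.2 ∈ a :: L := fun c hc => hL ▸ snd_mem_thresholds hc
  have hmax : ∀ c ∈ C, c.2 ≤ a := fun c hc => by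
    rcases List.mem_cons.1 (hcover c hc) with h | h
    · exact h.le
    · exact (List.rel_of_pairwise_cons hsorted h).le
  have key := mul_sub_le_trapROC_map H a (L ++ [t₀]) ?_ fun c hc _ => ?_
  · rw [supportingPoints_eq ht₀, hL]
    simpa [FP_eq_N_of_lt fun c hc _ => ht₀ c hc, FP_eq_zero_of_le hmax] using key
  · rw [← List.cons_append, List.pairwise_append]
    refine ⟨hsorted, List.pairwise_singleton _ _, fun x hx y hy => ?_⟩
    obtain ⟨c, hc, rfl⟩ := (mem_thresholds C x).1 (hL ▸ hx)
    exact List.mem_singleton.1 hy ▸ ht₀ c hc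
  · rw [← List.cons_append]
    exact List.mem_append_left _ (hcover c hc)

end LowerBound

def NegRelPos (r : ℝ → ℝ → Prop) (C : Multiset Inst) : Prop :=
  ∀ n ∈ C, ∀ p ∈ C, n.1 = false → p.1 = true → r n.2 p.2

theorem NegRelPos.mono {r : ℝ → ℝ → Prop} {C C' : Multiset Inst} (h : NegRelPos r C)
    (hC' : C' ≤ C) : NegRelPos r C' := fun n hn p hp =>
  h n (Multiset.mem_of_le hC' hn) p (Multiset.mem_of_le hC' hp)

theorem forall_lt_label_iff_negRelPos {r : ℝ → ℝ → Prop} {C : Multiset Inst} :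
    (∀ c ∈ C, ∀ c' ∈ C, (c.1 < c'.1 → r c.2 c'.2) ∧ (c'.1 < c.1 → r c'.2 c.2)) ↔
      NegRelPos r C := by
  refine ⟨fun h n hn p hp hn₁ hp₁ => (h n hn p hp).1 (by simp [hn₁, hp₁]),
    fun h c hc c' hc' => ?_⟩
  exact ⟨fun hlt => h c hc c' hc' (Bool.lt_iff.1 hlt).1 (Bool.lt_iff.1 hlt).2,
    fun hlt => h c' hc' c hc (Bool.lt_iff.1 hlt).1 (Bool.lt_iff.1 hlt).2⟩

open Classical in
theorem bROCAUC_eq (C : Multiset Inst) :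
    bROCAUC C =
      if NegRelPos (· < ·) C then 1 else if NegRelPos (· ≤ ·) C then 1 / 2 else 0 := by
  simp only [bROCAUC, forall_lt_label_iff_negRelPos]

section Bounds

variable {C : Multiset Inst}

theorem one_le_ROCAUC (hP : 1 ≤ P C) (hN : 1 ≤ N C) (h : NegRelPos (· < ·) C) :
    1 ≤ ROCAUC C := by
  rw [ROCAUC, le_div_iff₀ (mul_pos (Nat.cast_pos.2 hP) (Nat.cast_pos.2 hN)), one_mul]
  refine mul_N_le_trapROC (ne_zero_of_one_le_P hP) fun t t' htt' ⟨n, hnC, hn, hnt⟩ => ?_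
  have hpos : ∀ p ∈ C, p.1 = true → t < p.2 := fun p hp hp₁ => hnt ▸ h n hnC p hp hn hp₁
  rw [TP_eq_P_of_lt hpos, TP_eq_P_of_lt fun p hp hp₁ => htt'.trans (hpos p hp hp₁)]
  linarith

theorem half_le_ROCAUC (hP : 1 ≤ P C) (hN : 1 ≤ N C) (h : NegRelPos (· ≤ ·) C) :
    1 / 2 ≤ ROCAUC C := by
  rw [ROCAUC, le_div_iff₀ (mul_pos (Nat.cast_pos.2 hP) (Nat.cast_pos.2 hN))]
  have key := mul_N_le_trapROC (K := P C / 2) (ne_zero_of_one_le_P hP)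
    fun t t' htt' ⟨n, hnC, hn, hnt⟩ => by
      rw [TP_eq_P_of_lt fun p hp hp₁ => htt'.trans_le (hnt ▸ h n hnC p hp hn hp₁)]
      linarith [(TP C t).cast_nonneg (α := ℝ)]
  linarith

end Bounds

section Pair

variable {p n : Inst}

theorem P_pair (hp : p.1 = true) (hn : n.1 = false) : P (p ::ₘ {n}) = 1 := by
  simp [P, Multiset.filter_singleton, hp, hn]

theorem N_pair (hp : p.1 = true) (hn : n.1 = false) : N (p ::ₘ {n}) = 1 := by
  simp [N, Multiset.filter_singleton, hp, hn]

theorem pair_le {C : Multiset Inst} (hp : p ∈ C) (hn : n ∈ C) (hpn : p ≠ n) :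
    p ::ₘ {n} ≤ C :=
  (Multiset.le_iff_subset (by simpa using hpn)).2 (by simp [Multiset.cons_subset, hp, hn])

theorem ROCAUC_pair (hp : p.1 = true) (hn : n.1 = false) :
    ROCAUC (p ::ₘ {n}) = if n.2 < p.2 then 1 else if n.2 = p.2 then 1 / 2 else 0 := by
  rw [ROCAUC, supportingPoints_eq_map_thresholds, P_pair hp hn, N_pair hp hn]
  rcases lt_trichotomy n.2 p.2 with h | h | h
  · rw [thresholds_eq (l := [p.2, n.2]) (by simpa using h) (by simp [eq_comm])]
    simp [trapROC, TP, FP, Multiset.filter_singleton, hp, hn, h, h.not_gt]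
  · rw [thresholds_eq (l := [p.2]) (by simp) (by simp [eq_comm, h])]
    simp [trapROC, TP, FP, Multiset.filter_singleton, hp, hn, h]
  · rw [thresholds_eq (l := [n.2, p.2]) (by simpa using h) (by simp [eq_comm, or_comm])]
    simp [trapROC, TP, FP, Multiset.filter_singleton, hp, hn, h, h.not_gt, h.ne']

end Pair

theorem exists_pair_ROCAUC_eq_bROCAUC {C : Multiset Inst} (hP : 1 ≤ P C) (hN : 1 ≤ N C) :
    ∃ p ∈ C, ∃ n ∈ C, p.1 = true ∧ n.1 = false ∧ ROCAUC (p ::ₘ {n}) = bROCAUC C := by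
  simp only [bROCAUC_eq]
  by_cases hlt : NegRelPos (· < ·) C
  · obtain ⟨p, hpC, hp⟩ := exists_pos_of_one_le_P hP
    obtain ⟨n, hnC, hn⟩ := exists_neg_of_one_le_N hN
    refine ⟨p, hpC, n, hnC, hp, hn, ?_⟩
    rw [ROCAUC_pair hp hn, if_pos (hlt n hnC p hpC hn hp), if_pos hlt]
  by_cases hle : NegRelPos (· ≤ ·) C
  · obtain ⟨n, hnC, p, hpC, hn, hp, hnp⟩ :
        ∃ n ∈ C, ∃ p ∈ C, n.1 = false ∧ p.1 = true ∧ ¬ n.2 < p.2 := by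
      simpa [NegRelPos] using hlt
    refine ⟨p, hpC, n, hnC, hp, hn, ?_⟩
    rw [ROCAUC_pair hp hn, if_neg hnp, if_pos ((hle n hnC p hpC hn hp).antisymm (not_lt.1 hnp)),
      if_neg hlt, if_pos hle]
  · obtain ⟨n, hnC, p, hpC, hn, hp, hnp⟩ :
        ∃ n ∈ C, ∃ p ∈ C, n.1 = false ∧ p.1 = true ∧ ¬ n.2 ≤ p.2 := by
      simpa [NegRelPos] using hle
    refine ⟨p, hpC, n, hnC, hp, hn, ?_⟩
    rw [ROCAUC_pair hp hn, if_neg fun h => hnp h.le, if_neg fun h => hnp h.le, if_neg hlt,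
      if_neg hle]

/-- `b_ROCAUC C` is a tight lower bound for the ROC AUC over
sub-multisets of `C`. -/
theorem bROCAUC_tight_lower_bound (C : Multiset Inst)
    (hP : 1 ≤ P C) (hN : 1 ≤ N C) :
    (∀ C' ≤ C, 1 ≤ P C' → 1 ≤ N C' → bROCAUC C ≤ ROCAUC C') ∧
    (∃ C' ≤ C, 1 ≤ P C' ∧ 1 ≤ N C' ∧ ROCAUC C' = bROCAUC C) := by
  refine ⟨fun C' hC' hP' hN' => ?_, ?_⟩
  · rw [bROCAUC_eq]
    split_ifs with hlt hle
    · exact one_le_ROCAUC hP' hN' (hlt.mono hC')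
    · exact half_le_ROCAUC hP' hN' (hle.mono hC')
    · exact ROCAUC_nonneg C'
  · obtain ⟨p, hpC, n, hnC, hp, hn, hpair⟩ := exists_pair_ROCAUC_eq_bROCAUC hP hN
    have hpn : p ≠ n := fun h => by simp [h, hn] at hp
    exact ⟨p ::ₘ {n}, pair_le hpC hnC hpn, (P_pair hp hn).ge, (N_pair hp hn).ge, hpair⟩
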